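/- Let ε ~ N(0, σ²I) on ℝ^d and let S be measurable with N(x, σ²I)(S) = p ∈ (0,1). Among all measurable sets with this Gaussian measure at x, the half-space H = {z : ⟨z − x, δ/‖δ‖₂⟩ ≤ σΦ⁻¹(p)} minimizes N(x+δ, σ²I)(S) for any fixed δ ≠ 0; the minimum value is Φ(Φ⁻¹(p) − ‖δ‖₂/σ). -/

import Mathlib

open MeasureTheory ProbabilityTheory

/-- Standard normal CDF. -/
noncomputable def Phi (t : ℝ) : ℝ := ((gaussianReal 0 1) (Set.Iic t)).toReal

/-- Inverse of the standard normal CDF on (0,1). -/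
noncomputable def PhiInv (p : ℝ) : ℝ := Function.invFun Phi p

/-- Isotropic Gaussian N(0, σ²I) on ℝ^d. -/
noncomputable def isoGaussian (d : ℕ) (σ : ℝ) : Measure (EuclideanSpace ℝ (Fin d)) :=
  (Measure.pi fun _ : Fin d => gaussianReal 0 ⟨σ ^ 2, sq_nonneg σ⟩).map
    (MeasurableEquiv.toLp 2 (Fin d → ℝ))

/-- The Gaussian measure N(x, σ²I) on ℝ^d. -/
noncomputable def gaussAt {d : ℕ} (σ : ℝ) (x : EuclideanSpace ℝ (Fin d)) :
    Measure (EuclideanSpace ℝ (Fin d)) :=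
  (isoGaussian d σ).map (fun e => x + e)

/-!
Relative to `N(x, σ²I)`, the measure `N(x + δ, σ²I)` has density
`z ↦ exp ((⟪z - x, δ⟫ - ‖δ‖² / 2) / σ²)`, an increasing function of the projection
`⟪z - x, u⟫` on `u = δ / ‖δ‖`. The half-space `H` is therefore a sublevel set of this density:
it is `≤ k` on `H \ S` and `≥ k` on `S \ H` for the threshold `k` attained on the boundary of `H`.
If `S` has the same `N(x, σ²I)`-mass as `H`, then `S \ H` and `H \ S` have equal mass too, so
exchanging them can only increase the `N(x + δ, σ²I)`-mass. The two masses of `H` itself are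
read off from the projection `⟪ε, u⟫ ~ N(0, σ²)` of the isotropic Gaussian noise.
-/

open Real Set Filter
open scoped NNReal ENNReal RealInnerProductSpace

namespace ProbabilityTheory

theorem continuous_cdf (μ : Measure ℝ) [IsProbabilityMeasure μ] [NullSingletonClass μ] :
    Continuous (cdf μ) := by
  refine continuous_iff_continuousAt.2 fun a ↦ ?_
  have hatom : ENNReal.ofReal (cdf μ a - Function.leftLim (cdf μ) a) = 0 := by
    rw [← StieltjesFunction.measure_singleton, measure_cdf, measure_singleton]
  rw [(monotone_cdf μ).continuousAt_iff_leftLim_eq_rightLim, StieltjesFunction.rightLim_eq]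
  exact le_antisymm ((monotone_cdf μ).leftLim_le le_rfl)
    (sub_nonpos.1 (ENNReal.ofReal_eq_zero.1 hatom))

theorem Ioo_subset_range_cdf (μ : Measure ℝ) [IsProbabilityMeasure μ] [NullSingletonClass μ] :
    Ioo 0 1 ⊆ range (cdf μ) := fun _ hp ↦
  mem_range_of_exists_le_of_exists_ge (continuous_cdf μ)
    ((tendsto_cdf_atBot μ).eventually (eventually_le_nhds hp.1)).exists
    ((tendsto_cdf_atTop μ).eventually (eventually_ge_nhds hp.2)).exists

end ProbabilityTheory

theorem Phi_eq_cdf : Phi = cdf (gaussianReal 0 1) := by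
  ext t
  rw [cdf_eq_real, measureReal_def, Phi]

theorem Phi_PhiInv {p : ℝ} (hp : p ∈ Ioo 0 1) : Phi (PhiInv p) = p := by
  have := nullSingletonClass_gaussianReal (μ := 0) one_ne_zero
  exact Function.invFun_eq (Phi_eq_cdf ▸ Ioo_subset_range_cdf _ hp)

namespace MeasureTheory

section NeymanPearson

variable {α : Type*} [MeasurableSpace α] {μ : Measure α}

theorem withDensity_apply_le_of_threshold {r : α → ℝ≥0∞} {k : ℝ≥0∞} {H S : Set α}
    (hH : MeasurableSet H) (hS : MeasurableSet S) (hrH : ∀ z ∈ H, r z ≤ k)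
    (hrHc : ∀ z ∉ H, k ≤ r z) (hμ : μ H ≤ μ S) (hμH : μ H ≠ ∞) :
    μ.withDensity r H ≤ μ.withDensity r S := by
  set ν := μ.withDensity r
  have hHS : μ (H \ S) ≤ μ (S \ H) := by
    refine ENNReal.le_of_add_le_add_left (a := μ (S ∩ H))
      (ne_top_of_le_ne_top hμH (measure_mono inter_subset_right)) ?_
    rwa [measure_inter_add_sdiff S hH, inter_comm, measure_inter_add_sdiff H hS]
  have hν_HS : ν (H \ S) ≤ k * μ (H \ S) := by
    rw [withDensity_apply _ (hH.diff hS), ← setLIntegral_const]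
    exact setLIntegral_mono' (hH.diff hS) fun z hz ↦ hrH z hz.1
  have hν_SH : k * μ (S \ H) ≤ ν (S \ H) := by
    rw [withDensity_apply _ (hS.diff hH), ← setLIntegral_const]
    exact setLIntegral_mono' (hS.diff hH) fun z hz ↦ hrHc z hz.2
  calc ν H = ν (S ∩ H) + ν (H \ S) := by rw [inter_comm, measure_inter_add_sdiff H hS]
    _ ≤ ν (S ∩ H) + ν (S \ H) := by grw [hν_HS, hHS, hν_SH]
    _ = ν S := measure_inter_add_sdiff S hH

theorem withDensity_comp_sublevel_le {t : α → ℝ} (ht : Measurable t) {g : ℝ → ℝ≥0∞}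
    (hg : Monotone g) {c : ℝ} {S : Set α} (hS : MeasurableSet S)
    (hμ : μ {z | t z ≤ c} ≤ μ S) (hμH : μ {z | t z ≤ c} ≠ ∞) :
    μ.withDensity (g ∘ t) {z | t z ≤ c} ≤ μ.withDensity (g ∘ t) S :=
  withDensity_apply_le_of_threshold (measurableSet_le ht measurable_const) hS
    (fun _ hz ↦ hg hz) (fun _ hz ↦ hg (not_le.1 hz).le) hμ hμH

end NeymanPearson

theorem _root_.MeasurableEquiv.map_withDensity {α β : Type*} [MeasurableSpace α]
    [MeasurableSpace β] (e : α ≃ᵐ β) (μ : Measure α) (g : α → ℝ≥0∞) :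
    (μ.withDensity g).map e = (μ.map e).withDensity (g ∘ e.symm) := by
  ext s hs
  rw [Measure.map_apply e.measurable hs, withDensity_apply _ (e.measurable hs),
    withDensity_apply _ hs, e.restrict_map, lintegral_map_equiv]
  simp

theorem Measure.pi_withDensity {ι : Type*} [Fintype ι] {α : ι → Type*}
    [∀ i, MeasurableSpace (α i)] (μ : ∀ i, Measure (α i)) [∀ i, IsProbabilityMeasure (μ i)]
    {f : ∀ i, α i → ℝ≥0∞} (hf : ∀ i, Measurable (f i))
    [∀ i, SigmaFinite ((μ i).withDensity (f i))] :
    Measure.pi (fun i ↦ (μ i).withDensity (f i))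
      = (Measure.pi μ).withDensity (fun x ↦ ∏ i, f i (x i)) := by
  refine Measure.pi_eq fun s hs ↦ ?_
  have hindicator : (univ.pi s).indicator (fun x ↦ ∏ i, f i (x i))
      = fun x ↦ ∏ i, (s i).indicator (f i) (x i) := by
    ext x
    by_cases hx : x ∈ univ.pi s
    · rw [indicator_of_mem hx]
      exact Finset.prod_congr rfl fun i _ ↦ (indicator_of_mem (hx i (mem_univ i)) _).symm
    · obtain ⟨i, hi⟩ : ∃ i, x i ∉ s i := by simpa [mem_univ_pi] using hx
      rw [indicator_of_notMem hx]
      exact (Finset.prod_eq_zero (Finset.mem_univ i) (indicator_of_notMem hi _)).symm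
  have hmeas i : Measurable ((s i).indicator (f i)) := (hf i).indicator (hs i)
  rw [withDensity_apply _ (.univ_pi hs), ← lintegral_indicator (.univ_pi hs), hindicator,
    lintegral_prod_eq_prod_lintegral_of_indepFun _ _
      (iIndepFun_pi fun i ↦ (hmeas i).aemeasurable)
      fun i ↦ (hmeas i).comp (measurable_pi_apply i)]
  refine Finset.prod_congr rfl fun i _ ↦ ?_
  rw [withDensity_apply _ (hs i), ← lintegral_indicator (hs i),
    ← (measurePreserving_eval μ i).lintegral_comp (hmeas i)]

end MeasureTheory

namespace ProbabilityTheory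

theorem gaussianReal_eq_withDensity_gaussianReal_zero (m : ℝ) {v : ℝ≥0} (hv : v ≠ 0) :
    gaussianReal m v = (gaussianReal 0 v).withDensity
      (fun y ↦ ENNReal.ofReal (exp ((m * y - m ^ 2 / 2) / v))) := by
  have hv' : (v : ℝ) ≠ 0 := by exact_mod_cast hv
  rw [gaussianReal_of_var_ne_zero _ hv, gaussianReal_of_var_ne_zero _ hv,
    ← withDensity_mul _ (measurable_gaussianPDF _ _) (by fun_prop)]
  congr 1 with y
  simp only [Pi.mul_apply, gaussianPDF, gaussianPDFReal]
  rw [← ENNReal.ofReal_mul (by positivity), mul_assoc _ (rexp _), ← exp_add]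
  congr 3
  field_simp
  ring

theorem stdGaussian_map_inner {E : Type*} [NormedAddCommGroup E] [InnerProductSpace ℝ E]
    [FiniteDimensional ℝ E] [MeasurableSpace E] [BorelSpace E] (w : E) :
    (stdGaussian E).map (⟪·, w⟫) = gaussianReal 0 (‖w‖₊ ^ 2) := by
  have hL : (⟪·, w⟫) = ⇑(innerSL ℝ w) := by
    ext e
    exact real_inner_comm w e
  rw [hL, IsGaussian.map_eq_gaussianReal, integral_strongDual_stdGaussian,
    variance_dual_stdGaussian, innerSL_apply_norm]
  congr
  ext
  simp

end ProbabilityTheory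

theorem isoGaussian_eq_map_smul_stdGaussian (d : ℕ) (σ : ℝ) :
    isoGaussian d σ = (stdGaussian (EuclideanSpace ℝ (Fin d))).map (σ • ·) := by
  have hscale : gaussianReal 0 ⟨σ ^ 2, sq_nonneg σ⟩ = (gaussianReal 0 1).map (σ * ·) := by
    rw [gaussianReal_map_const_mul, mul_zero, mul_one]
    rfl
  rw [isoGaussian, ← map_pi_eq_stdGaussian, Measure.map_map (by fun_prop) (by fun_prop)]
  simp_rw [hscale]
  rw [← Measure.pi_map_pi fun _ ↦ (measurable_const_mul σ).aemeasurable,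
    Measure.map_map (by fun_prop) (by fun_prop)]
  rfl

instance isProbabilityMeasure_gaussAt {d : ℕ} (σ : ℝ) (x : EuclideanSpace ℝ (Fin d)) :
    IsProbabilityMeasure (gaussAt σ x) := by
  rw [gaussAt, isoGaussian_eq_map_smul_stdGaussian, Measure.map_map (by fun_prop) (by fun_prop)]
  exact Measure.isProbabilityMeasure_map (by fun_prop)

theorem isoGaussian_map_const_add {d : ℕ} {σ : ℝ} (hσ : σ ≠ 0) (δ : EuclideanSpace ℝ (Fin d)) :
    (isoGaussian d σ).map (δ + ·) = (isoGaussian d σ).withDensity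
      (fun e ↦ ENNReal.ofReal (exp ((⟪e, δ⟫ - ‖δ‖ ^ 2 / 2) / σ ^ 2))) := by
  set v : ℝ≥0 := ⟨σ ^ 2, sq_nonneg σ⟩
  have hv : v ≠ 0 := fun h ↦ pow_ne_zero 2 hσ (congrArg NNReal.toReal h)
  set ρ : Fin d → ℝ → ℝ≥0∞ := fun i y ↦ ENNReal.ofReal (exp ((δ i * y - δ i ^ 2 / 2) / v))
  have hρ i : Measurable (ρ i) := by fun_prop
  have (i : Fin d) : SigmaFinite ((gaussianReal 0 v).withDensity (ρ i)) := by
    rw [← gaussianReal_eq_withDensity_gaussianReal_zero _ hv]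
    infer_instance
  have hshift : (Measure.pi fun _ : Fin d ↦ gaussianReal 0 v).map (fun y i ↦ δ i + y i)
      = Measure.pi fun i ↦ (gaussianReal 0 v).withDensity (ρ i) := by
    rw [Measure.pi_map_pi fun i ↦ (measurable_const_add (δ i)).aemeasurable]
    congr 1 with i
    rw [gaussianReal_map_const_add, zero_add, gaussianReal_eq_withDensity_gaussianReal_zero _ hv]
  set φ := MeasurableEquiv.toLp 2 (Fin d → ℝ)
  have hcomm : (δ + ·) ∘ φ = φ ∘ (fun y i ↦ δ i + y i) := rfl
  rw [isoGaussian, Measure.map_map (measurable_const_add δ) φ.measurable, hcomm,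
    ← Measure.map_map φ.measurable (by fun_prop), hshift, Measure.pi_withDensity _ hρ,
    MeasurableEquiv.map_withDensity]
  congr 1 with e
  simp only [Function.comp_apply, ρ]
  rw [← ENNReal.ofReal_prod_of_nonneg fun _ _ ↦ (exp_pos _).le, ← exp_sum]
  congr 2
  rw [show (v : ℝ) = σ ^ 2 from rfl, ← Finset.sum_div, Finset.sum_sub_distrib, ← Finset.sum_div,
    EuclideanSpace.real_norm_sq_eq, PiLp.inner_apply]
  simp [φ]

theorem gaussAt_add_eq_withDensity {d : ℕ} {σ : ℝ} (hσ : σ ≠ 0)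
    (x δ : EuclideanSpace ℝ (Fin d)) :
    gaussAt σ (x + δ) = (gaussAt σ x).withDensity
      (fun z ↦ ENNReal.ofReal (exp ((⟪z - x, δ⟫ - ‖δ‖ ^ 2 / 2) / σ ^ 2))) := by
  have hcomp : (x + δ + ·) = MeasurableEquiv.addLeft x ∘ (δ + ·) := by
    ext e : 1
    exact add_assoc x δ e
  rw [gaussAt, gaussAt, hcomp, ← Measure.map_map (by fun_prop) (by fun_prop),
    isoGaussian_map_const_add hσ, MeasurableEquiv.map_withDensity]
  congr 1 with z
  simp [sub_eq_neg_add]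

theorem gaussAt_halfspace {d : ℕ} {σ : ℝ} (hσ : 0 < σ) {u : EuclideanSpace ℝ (Fin d)}
    (hu : ‖u‖ = 1) (x y : EuclideanSpace ℝ (Fin d)) (c : ℝ) :
    (gaussAt σ y {z | ⟪z - x, u⟫ ≤ c}).toReal = Phi ((c - ⟪y - x, u⟫) / σ) := by
  have hpre : (y + ·) ∘ (σ • ·) ⁻¹' {z | ⟪z - x, u⟫ ≤ c}
      = (⟪·, u⟫) ⁻¹' Iic ((c - ⟪y - x, u⟫) / σ) := by
    ext e
    simp only [mem_preimage, Function.comp_apply, mem_ofPred_eq, mem_Iic, le_div_iff₀ hσ,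
      add_sub_right_comm, inner_add_left, real_inner_smul_left]
    constructor <;> intro h <;> linarith
  rw [gaussAt, isoGaussian_eq_map_smul_stdGaussian, Measure.map_map (by fun_prop) (by fun_prop),
    Measure.map_apply (by fun_prop) (measurableSet_le (by fun_prop) (by fun_prop)), hpre,
    ← Measure.map_apply (by fun_prop) measurableSet_Iic, stdGaussian_map_inner,
    show ‖u‖₊ = 1 from NNReal.eq hu, one_pow, Phi]

open RealInnerProductSpace in
/-- Neyman–Pearson lemma for Gaussian shifts: among measurable sets of N(x,σ²I)-measure p,
the half-space orthogonal to δ minimizes the N(x+δ,σ²I)-measure, with minimum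
Φ(Φ⁻¹(p) − ‖δ‖/σ). -/
theorem neyman_pearson_gaussian
    {d : ℕ} (σ : ℝ) (hσ : 0 < σ) (p : ℝ) (hp : p ∈ Set.Ioo (0 : ℝ) 1)
    (x δ : EuclideanSpace ℝ (Fin d)) (hδ : δ ≠ 0) :
    (∀ S : Set (EuclideanSpace ℝ (Fin d)), MeasurableSet S →
      (gaussAt σ x S).toReal = p →
      Phi (PhiInv p - ‖δ‖ / σ) ≤ (gaussAt σ (x + δ) S).toReal) ∧
    (gaussAt σ x {z | ⟪z - x, (‖δ‖⁻¹ : ℝ) • δ⟫ ≤ σ * PhiInv p}).toReal = p ∧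
    (gaussAt σ (x + δ) {z | ⟪z - x, (‖δ‖⁻¹ : ℝ) • δ⟫ ≤ σ * PhiInv p}).toReal
      = Phi (PhiInv p - ‖δ‖ / σ) := by
  set u := (‖δ‖⁻¹ : ℝ) • δ
  have hδ₀ : ‖δ‖ ≠ 0 := norm_ne_zero_iff.2 hδ
  have hu : ‖u‖ = 1 := norm_smul_inv_norm hδ
  have hδu : ⟪x + δ - x, u⟫ = ‖δ‖ := by
    rw [add_sub_cancel_left, real_inner_smul_right, real_inner_self_eq_norm_sq, sq,
      inv_mul_cancel_left₀ hδ₀]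
  have hH₀ := gaussAt_halfspace hσ hu x x (σ * PhiInv p)
  rw [sub_self, inner_zero_left, sub_zero, mul_div_cancel_left₀ _ hσ.ne', Phi_PhiInv hp] at hH₀
  have hH₁ := gaussAt_halfspace hσ hu x (x + δ) (σ * PhiInv p)
  rw [hδu, sub_div, mul_div_cancel_left₀ _ hσ.ne'] at hH₁
  refine ⟨fun S hS hSp ↦ ?_, hH₀, hH₁⟩
  set g : ℝ → ℝ≥0∞ := fun t ↦ ENNReal.ofReal (exp ((‖δ‖ * t - ‖δ‖ ^ 2 / 2) / σ ^ 2))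
  have hg : Monotone g := fun a b hab ↦ by dsimp only [g]; gcongr
  have hdens : gaussAt σ (x + δ) = (gaussAt σ x).withDensity (g ∘ (⟪· - x, u⟫)) := by
    rw [gaussAt_add_eq_withDensity hσ.ne']
    congr with z
    simp only [Function.comp_apply, g, u, real_inner_smul_right, mul_inv_cancel_left₀ hδ₀]
  have hHS : gaussAt σ x {z | ⟪z - x, u⟫ ≤ σ * PhiInv p} ≤ gaussAt σ x S :=
    ((ENNReal.toReal_eq_toReal_iff' (measure_ne_top _ _) (measure_ne_top _ _)).1
      (hH₀.trans hSp.symm)).le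
  rw [← hH₁]
  refine ENNReal.toReal_mono (measure_ne_top _ _) ?_
  rw [hdens]
  exact withDensity_comp_sublevel_le (by fun_prop) hg hS hHS (measure_ne_top _ _)
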